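/- Let C_1, …, C_k be pairwise disjoint nonempty subsets of X whose union is X, let p ∈ (0,1), and let v := M^∞_{[C_1]} · (M^∞_{[C_2]} · ( ⋯ (M^∞_{[C_k]} · P) ⋯ )), the successive matrix–vector products applied to a vector P indexed by configurations with all entries strictly positive. Then for every configuration i: v(i) > 0 if i is constant on each C_r (i.e. for every r, either i(a) = 1 for all a ∈ C_r or i(a) = 0 for all a ∈ C_r), and v(i) = 0 otherwise. (Theorem 1: in the limit of infinite convergence time, the only configurations with positive probability are those in which all taxa of each convergence group have identical states.) -/

import Mathlib

open scoped Classical in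
noncomputable def Minf {X : Type*} [Fintype X] [DecidableEq X]
    (C : Finset X) (p : ℝ) : Matrix (X → Fin 2) (X → Fin 2) ℝ :=
  Matrix.of fun i j =>
    if (∀ a ∈ C, i a = 1) ∧ (∀ a ∉ C, i a = j a) then p
    else if (∀ a ∈ C, i a = 0) ∧ (∀ a ∉ C, i a = j a) then 1 - p
    else 0

/-!
Each `M^∞_{[C]}` is nonnegative, its entry `(i, j)` vanishes unless `i` is constant on `C` and
agrees with `j` off `C`, and at such an `i` its diagonal entry is `p` or `1 - p`, hence positive.
So `(M^∞_{[C]} *ᵥ w) i > 0` iff `w j > 0` for some such `j`. Inductively over the groups, `j` is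
constant on the later groups, and since these are disjoint from `C`, so is `i`; conversely
`j = i` is a witness.
-/

open Matrix

def IsConstantOn {X : Type*} (i : X → Fin 2) (S : Finset X) : Prop :=
  (∀ a ∈ S, i a = 1) ∨ (∀ a ∈ S, i a = 0)

theorem IsConstantOn.congr {X : Type*} {i j : X → Fin 2} {S : Finset X}
    (hij : ∀ a ∈ S, i a = j a) (hi : IsConstantOn i S) : IsConstantOn j S := by
  rcases hi with h | h
  · exact .inl fun a ha => hij a ha ▸ h a ha
  · exact .inr fun a ha => hij a ha ▸ h a ha

theorem Matrix.mulVec_pos_iff_of_nonneg {m n : Type*} [Fintype n] {M : Matrix m n ℝ}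
    {w : n → ℝ} (hM : ∀ i j, 0 ≤ M i j) (hw : ∀ j, 0 ≤ w j) (i : m) :
    0 < (M *ᵥ w) i ↔ ∃ j, 0 < M i j ∧ 0 < w j := by
  simp only [mulVec, dotProduct]
  rw [Finset.sum_pos_iff_of_nonneg fun j _ => mul_nonneg (hM i j) (hw j)]
  refine exists_congr fun j => ⟨fun h => ⟨?_, ?_⟩, fun h => ⟨Finset.mem_univ j, mul_pos h.1 h.2⟩⟩
  · exact (hM i j).lt_of_ne fun h0 => by simp [← h0] at h
  · exact (hw j).lt_of_ne fun h0 => by simp [← h0] at h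

theorem List.foldr_mulVec_nonneg {n : Type*} [Fintype n] {Ms : List (Matrix n n ℝ)}
    (hMs : ∀ M ∈ Ms, ∀ i j, 0 ≤ M i j) {P : n → ℝ} (hP : ∀ i, 0 ≤ P i) (i : n) :
    0 ≤ Ms.foldr (fun M w => M *ᵥ w) P i := by
  induction Ms generalizing i with
  | nil => exact hP i
  | cons M Ms ih =>
    exact Finset.sum_nonneg fun j _ => mul_nonneg (hMs M (by simp) i j)
      (ih (fun M' hM' => hMs M' (by simp [hM'])) j)

section Minf

variable {X : Type*} [Fintype X] [DecidableEq X] {C : Finset X} {p : ℝ}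

theorem Minf_apply_nonneg (hp : p ∈ Set.Icc (0 : ℝ) 1) (i j : X → Fin 2) :
    0 ≤ Minf C p i j := by
  rw [Minf, of_apply]
  split_ifs <;> linarith [hp.1, hp.2]

theorem Minf_apply_self_pos (hp : p ∈ Set.Ioo (0 : ℝ) 1) {i : X → Fin 2}
    (hi : IsConstantOn i C) : 0 < Minf C p i i := by
  rw [Minf, of_apply]
  split_ifs with h1 h0
  · exact hp.1
  · linarith [hp.2]
  · rcases hi with hi | hi
    · exact absurd ⟨hi, fun _ _ => rfl⟩ h1
    · exact absurd ⟨hi, fun _ _ => rfl⟩ h0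

theorem isConstantOn_and_eqOn_of_Minf_apply_ne_zero {i j : X → Fin 2}
    (h : Minf C p i j ≠ 0) : IsConstantOn i C ∧ ∀ a ∉ C, i a = j a := by
  rw [Minf, of_apply] at h
  split_ifs at h with h1 h0
  · exact ⟨.inl h1.1, h1.2⟩
  · exact ⟨.inr h0.1, h0.2⟩
  · exact absurd rfl h

theorem foldr_Minf_mulVec_nonneg (hp : p ∈ Set.Icc (0 : ℝ) 1) {P : (X → Fin 2) → ℝ}
    (hP : ∀ i, 0 ≤ P i) (L : List (Finset X)) (i : X → Fin 2) :
    0 ≤ (L.map (Minf · p)).foldr (fun M w => M *ᵥ w) P i :=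
  List.foldr_mulVec_nonneg (by simpa using fun _ _ => Minf_apply_nonneg hp) hP i

theorem foldr_Minf_mulVec_pos_iff (hp : p ∈ Set.Ioo (0 : ℝ) 1) {P : (X → Fin 2) → ℝ}
    (hP : ∀ i, 0 < P i) {L : List (Finset X)} (hL : L.Pairwise Disjoint) (i : X → Fin 2) :
    0 < (L.map (Minf · p)).foldr (fun M w => M *ᵥ w) P i ↔ ∀ S ∈ L, IsConstantOn i S := by
  induction L generalizing i with
  | nil => simpa using hP i
  | cons C L ih =>
    rw [List.pairwise_cons] at hL
    have hw := foldr_Minf_mulVec_nonneg (Set.Ioo_subset_Icc_self hp) (fun i => (hP i).le) L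
    rw [List.map_cons, List.foldr_cons,
      mulVec_pos_iff_of_nonneg (Minf_apply_nonneg (Set.Ioo_subset_Icc_self hp)) hw,
      List.forall_mem_cons]
    constructor
    · rintro ⟨j, hMij, hwj⟩
      obtain ⟨hiC, hij⟩ := isConstantOn_and_eqOn_of_Minf_apply_ne_zero hMij.ne'
      refine ⟨hiC, fun S hS => ((ih hL.2 j).mp hwj S hS).congr fun a ha => ?_⟩
      exact (hij a (Finset.disjoint_right.mp (hL.1 S hS) ha)).symm
    · rintro ⟨hiC, hiL⟩
      exact ⟨i, Minf_apply_self_pos hp hiC, (ih hL.2 i).mpr hiL⟩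

end Minf

theorem limit_phylogenetic_tensor_support_general {X : Type*} [Fintype X] [DecidableEq X]
    {k : ℕ} (C : Fin k → Finset X)
    (hdisj : ∀ r s : Fin k, r ≠ s → Disjoint (C r) (C s))
    (p : ℝ) (hp : p ∈ Set.Ioo (0 : ℝ) 1)
    (P : (X → Fin 2) → ℝ) (hP : ∀ i, 0 < P i)
    (v : (X → Fin 2) → ℝ)
    (hv : v = (List.ofFn fun r : Fin k => Minf (C r) p).foldr
      (fun M w => M.mulVec w) P) :
    ∀ i : X → Fin 2,
      ((∀ r : Fin k, (∀ a ∈ C r, i a = 1) ∨ (∀ a ∈ C r, i a = 0)) → 0 < v i) ∧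
      ((¬ ∀ r : Fin k, (∀ a ∈ C r, i a = 1) ∨ (∀ a ∈ C r, i a = 0)) → v i = 0) := by
  intro i
  have hpairwise : (List.ofFn C).Pairwise Disjoint :=
    List.pairwise_ofFn.mpr fun r s hrs => hdisj r s hrs.ne
  have hv' : v = ((List.ofFn C).map fun S => Minf S p).foldr (fun M w => M *ᵥ w) P := by
    rw [hv, List.map_ofFn]
    rfl
  have hpos : 0 < v i ↔ ∀ r, IsConstantOn i (C r) := by
    rw [hv', foldr_Minf_mulVec_pos_iff hp hP hpairwise, List.forall_mem_ofFn_iff]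
  have hnonneg : 0 ≤ v i :=
    hv' ▸ foldr_Minf_mulVec_nonneg (Set.Ioo_subset_Icc_self hp) (fun i => (hP i).le) _ i
  exact ⟨hpos.mpr, fun h => hnonneg.eq_of_not_lt' (h ∘ hpos.mp)⟩

/-- Theorem 1: in the limit of infinite convergence time, the only configurations with
positive probability are those in which all taxa of each convergence group have
identical states.  With `C₁, …, C_k` pairwise disjoint nonempty subsets of `X` whose
union is `X` and `v = M^∞_{[C₁]} · (M^∞_{[C₂]} · (⋯ (M^∞_{[C_k]} · P) ⋯))` for a
strictly positive vector `P`, one has `v i > 0` iff `i` is constant on each `C_r`,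
and `v i = 0` otherwise. -/
theorem limit_phylogenetic_tensor_support {X : Type*} [Fintype X] [DecidableEq X]
    {k : ℕ} (C : Fin k → Finset X)
    (hdisj : ∀ r s : Fin k, r ≠ s → Disjoint (C r) (C s))
    (hne : ∀ r : Fin k, (C r).Nonempty)
    (hunion : Finset.univ.biUnion C = (Finset.univ : Finset X))
    (p : ℝ) (hp : p ∈ Set.Ioo (0 : ℝ) 1)
    (P : (X → Fin 2) → ℝ) (hP : ∀ i, 0 < P i)
    (v : (X → Fin 2) → ℝ)
    (hv : v = (List.ofFn fun r : Fin k => Minf (C r) p).foldr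
      (fun M w => M.mulVec w) P) :
    ∀ i : X → Fin 2,
      ((∀ r : Fin k, (∀ a ∈ C r, i a = 1) ∨ (∀ a ∈ C r, i a = 0)) → 0 < v i) ∧
      ((¬ ∀ r : Fin k, (∀ a ∈ C r, i a = 1) ∨ (∀ a ∈ C r, i a = 0)) → v i = 0) :=
  limit_phylogenetic_tensor_support_general C hdisj p hp P hP v hv
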